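/- arXiv:2010.13068 — 3 statements merged into one kernel-verified Lean document; each statement's English description precedes it below -/
import Mathlib

section
/- Let α ∈ (0,1). For every z ∈ ℂ with |z| ≤ 1, one has Re( (25/12 − 4z + 3z² − (4/3)z³ + (1/4)z⁴)^α / (1 − (1/2)z) ) ≥ 0, where w^α denotes the principal branch of the complex power. -/
/-!
Write `g` for the BDF4 polynomial and `μ z = 1 - z / 2`. Since `re μ ≥ 1/2` on the closed unit
disk, `g / μ` is holomorphic there, and the maximum modulus principle for `exp (-(g / μ))` reduces
`0 ≤ re (g / μ)` to the unit circle. There `re (g * conj μ)` is a polynomial in `x = re z`, namely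
`(1 - x) (-2x³ + 23/6 x² - 3/2 x + 2/3)`, which is nonnegative on `[-1, 1]`.

With `θ = arg g` and `ψ = arg μ ∈ (-π/2, π/2)`, the sign of `re (g / μ)` is that of `cos (θ - ψ)`,
so `|θ - ψ| ≤ π/2`; and `re (g ^ α / μ)` has the sign of `cos (α θ - ψ)`, where
`α θ - ψ = α (θ - ψ) + (1 - α) (-ψ)` again lies in `[-π/2, π/2]`.
-/

open Complex Metric Real ComplexConjugate

theorem Complex.re_div_eq (a m : ℂ) :
    (a / m).re = (a.re * Real.cos (arg m) + a.im * Real.sin (arg m)) / ‖m‖ := by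
  rcases eq_or_ne m 0 with rfl | hm
  · simp
  have hm' : ‖m‖ ≠ 0 := norm_ne_zero_iff.2 hm
  rw [div_re, ← add_div, normSq_eq_norm_sq, ← norm_mul_cos_arg m, ← norm_mul_sin_arg m]
  field_simp

theorem Complex.re_cpow_ofReal_div (w m : ℂ) (α : ℝ) :
    (w ^ (α : ℂ) / m).re = ‖w‖ ^ α * Real.cos (α * arg w - arg m) / ‖m‖ := by
  rw [re_div_eq, cpow_ofReal_re, cpow_ofReal_im, Real.cos_sub, mul_comm α]
  ring

theorem Real.cos_mul_sub_nonneg {θ ψ α : ℝ} (hθ : |θ| ≤ π) (hψ : |ψ| < π / 2)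
    (hcos : 0 ≤ cos (θ - ψ)) (hα₀ : 0 ≤ α) (hα₁ : α ≤ 1) : 0 ≤ cos (α * θ - ψ) := by
  obtain ⟨hθl, hθu⟩ := abs_le.1 hθ
  obtain ⟨hψl, hψu⟩ := abs_lt.1 hψ
  have hθψ : |θ - ψ| ≤ π / 2 := by
    by_contra! h
    rcases lt_abs.1 h with h | h
    · exact (cos_neg_of_pi_div_two_lt_of_lt h (by linarith)).not_ge hcos
    · rw [← cos_neg] at hcos
      exact (cos_neg_of_pi_div_two_lt_of_lt h (by linarith)).not_ge hcos
  obtain ⟨hl, hu⟩ := abs_le.1 hθψ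
  have h₁ := mul_le_mul_of_nonneg_left hl hα₀
  have h₂ := mul_le_mul_of_nonneg_left hu hα₀
  have h₃ := mul_le_mul_of_nonneg_left hψl.le (sub_nonneg.2 hα₁)
  have h₄ := mul_le_mul_of_nonneg_left hψu.le (sub_nonneg.2 hα₁)
  exact cos_nonneg_of_mem_Icc ⟨by linarith, by linarith⟩

theorem Complex.re_cpow_ofReal_div_nonneg {w m : ℂ} (hm : 0 < m.re) (hwm : 0 ≤ (w / m).re)
    {α : ℝ} (hα₀ : 0 ≤ α) (hα₁ : α ≤ 1) : 0 ≤ (w ^ (α : ℂ) / m).re := by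
  have hψ : |arg m| < π / 2 := abs_arg_lt_pi_div_two_iff.2 (Or.inl hm)
  have hcos : 0 ≤ Real.cos (arg w - arg m) := by
    rcases eq_or_ne w 0 with rfl | hw
    · simpa using cos_nonneg_of_mem_Icc ⟨by linarith [abs_lt.1 hψ], (abs_lt.1 hψ).2.le⟩
    have hnorm : 0 < ‖w‖ / ‖m‖ :=
      div_pos (norm_pos_iff.2 hw) (norm_pos_iff.2 fun h ↦ by simp [h] at hm)
    have h := re_cpow_ofReal_div w m 1
    rw [ofReal_one, cpow_one, rpow_one, one_mul, mul_div_right_comm] at h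
    exact (mul_nonneg_iff_of_pos_left hnorm).1 (h ▸ hwm)
  rw [re_cpow_ofReal_div]
  have := Real.cos_mul_sub_nonneg (abs_arg_le_pi w) hψ hcos hα₀ hα₁
  positivity

theorem Complex.re_nonneg_of_forall_mem_frontier {E : Type*} [NormedAddCommGroup E]
    [NormedSpace ℂ E] [Nontrivial E] {f : E → ℂ} {U : Set E} (hU : Bornology.IsBounded U)
    (hf : DiffContOnCl ℂ f U) (hfU : ∀ z ∈ frontier U, 0 ≤ (f z).re) {z : E}
    (hz : z ∈ closure U) : 0 ≤ (f z).re := by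
  -- maximum modulus for `exp (-f)`, whose modulus is `exp (-re f)`
  have h := norm_le_of_forall_mem_frontier_norm_le hU
    (differentiable_exp.comp_diffContOnCl hf.neg) (C := 1)
    (fun w hw ↦ by simpa [norm_exp] using hfU w hw) hz
  simpa [norm_exp] using h

-- `∑ j ∈ Finset.Icc 1 4, (1 - z) ^ j / j`
noncomputable def bdf4 (z : ℂ) : ℂ :=
  25 / 12 - 4 * z + 3 * z ^ 2 - (4 / 3) * z ^ 3 + (1 / 4) * z ^ 4

noncomputable def bdf4Multiplier (z : ℂ) : ℂ := 1 - (1 / 2) * z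

theorem one_half_le_re_bdf4Multiplier {z : ℂ} (hz : ‖z‖ ≤ 1) :
    1 / 2 ≤ (bdf4Multiplier z).re := by
  have h := (abs_le.1 ((abs_re_le_norm z).trans hz)).2
  simp only [bdf4Multiplier, sub_re, one_re, mul_re, div_ofNat_re, div_ofNat_im, one_im]
  linarith

theorem bdf4Multiplier_ne_zero {z : ℂ} (hz : ‖z‖ ≤ 1) : bdf4Multiplier z ≠ 0 := fun h ↦ by
  have := one_half_le_re_bdf4Multiplier hz
  simp [h] at this
  linarith

theorem re_bdf4_mul_conj_bdf4Multiplier {z : ℂ} (hz : ‖z‖ = 1) :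
    (bdf4 z * conj (bdf4Multiplier z)).re
      = (1 - z.re) * (-2 * z.re ^ 3 + 23 / 6 * z.re ^ 2 - 3 / 2 * z.re + 2 / 3) := by
  have hn : z.re ^ 2 + z.im ^ 2 = 1 := by
    have h := Complex.sq_norm z
    rw [hz, normSq_apply] at h
    linarith
  simp only [bdf4, bdf4Multiplier, mul_re, mul_im, sub_re, sub_im, add_re, add_im, one_re, one_im,
    pow_succ, pow_zero, one_mul, conj_re, conj_im]
  norm_num
  linear_combination ((3/8) * z.re * z.im ^ 2 - (5/12) * z.im ^ 2 - (1/8) * z.re ^ 3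
    - (13/12) * z.re ^ 2 + (23/8) * z.re - 17/12) * hn

theorem re_bdf4_div_bdf4Multiplier_nonneg_of_norm_eq_one {z : ℂ} (hz : ‖z‖ = 1) :
    0 ≤ (bdf4 z / bdf4Multiplier z).re := by
  have hx := (abs_le.1 ((abs_re_le_norm z).trans hz.le))
  have hp : 0 ≤ (1 - z.re) * (-2 * z.re ^ 3 + 23 / 6 * z.re ^ 2 - 3 / 2 * z.re + 2 / 3) := by
    nlinarith [mul_nonneg (sub_nonneg.2 hx.2) (sq_nonneg (z.re - 1 / 4))]
  rw [← re_bdf4_mul_conj_bdf4Multiplier hz] at hp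
  rw [div_re, ← add_div]
  refine div_nonneg ?_ (normSq_nonneg _)
  simpa using hp

theorem re_bdf4_div_bdf4Multiplier_nonneg {z : ℂ} (hz : ‖z‖ ≤ 1) :
    0 ≤ (bdf4 z / bdf4Multiplier z).re := by
  have hdiff : DiffContOnCl ℂ (fun w ↦ bdf4 w / bdf4Multiplier w) (ball 0 1) := by
    refine DifferentiableOn.diffContOnCl (DifferentiableOn.div ?_ ?_ fun w hw ↦ ?_)
    · unfold bdf4; fun_prop
    · unfold bdf4Multiplier; fun_prop
    · rw [closure_ball _ one_ne_zero, mem_closedBall_zero_iff] at hw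
      exact bdf4Multiplier_ne_zero hw
  refine re_nonneg_of_forall_mem_frontier isBounded_ball hdiff (fun w hw ↦ ?_) ?_
  · rw [frontier_ball _ one_ne_zero, mem_sphere_zero_iff_norm] at hw
    exact re_bdf4_div_bdf4Multiplier_nonneg_of_norm_eq_one hw
  · rwa [closure_ball _ one_ne_zero, mem_closedBall_zero_iff]

/-- Lemma 4.2: A-stability of the pair (g, μ) for BDF4. -/
theorem stmt_5 (α : ℝ) (hα : α ∈ Set.Ioo (0 : ℝ) 1) (z : ℂ) (hz : ‖z‖ ≤ 1) :
    0 ≤ (((25 / 12 - 4 * z + 3 * z ^ 2 - (4 / 3) * z ^ 3 + (1 / 4) * z ^ 4) ^ (α : ℂ)) /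
          (1 - (1 / 2) * z)).re := by
  have hμ : 0 < (bdf4Multiplier z).re := by linarith [one_half_le_re_bdf4Multiplier hz]
  exact re_cpow_ofReal_div_nonneg hμ (re_bdf4_div_bdf4Multiplier_nonneg hz) hα.1.le hα.2.le
end

section
/- Let α ∈ (0,1). For every z ∈ ℂ with |z| ≤ 1, one has Re( (147/60 − 6z + (15/2)z² − (20/3)z³ + (15/4)z⁴ − (6/5)z⁵ + (1/6)z⁶)^α / ((1 − (3/5)z)(1 − (1/2)z)(1 − (1/3)z)) ) ≥ 0, where w^α denotes the principal branch of the complex power. -/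
/-!
Write `g` for the BDF6 polynomial and `μ` for the multiplier. First, `Re μ > 0` on the closed
unit disk. On the unit circle, `Re (g z * conj (μ z)) = (1 - x) q(x)` with `x = Re z` (the factor
`1 - x` reflects `g 1 = 0`) and a quintic `q` that is nonnegative for `x ≤ 1`; hence
`Re (g / μ) ≥ 0` on the circle, and on the whole disk by the maximum modulus principle applied
to `exp (-g / μ)`. Finally `|arg g - arg μ| ≤ π / 2` and `|arg μ| < π / 2`, and
`α arg g - arg μ = α (arg g - arg μ) - (1 - α) arg μ` is a convex combination of these two
angles, so `Re (g ^ α / μ) ≥ 0`.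
-/

open Complex Metric Real

namespace Complex

theorem re_cpow_ofReal_div_s7 (w v : ℂ) (α : ℝ) :
    (w ^ (α : ℂ) / v).re = ‖w‖ ^ α / ‖v‖ * Real.cos (arg w * α - arg v) := by
  rw [div_re, cpow_ofReal_re, cpow_ofReal_im, ← norm_mul_cos_arg v, ← norm_mul_sin_arg v,
    normSq_eq_norm_sq, Real.cos_sub]
  rcases eq_or_ne ‖v‖ 0 with hv | hv
  · simp [hv]
  · field_simp

theorem abs_arg_sub_arg_le_pi_div_two {w v : ℂ} (hv : 0 < v.re) (hwv : 0 ≤ (w / v).re) :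
    |arg w - arg v| ≤ π / 2 := by
  have hv' : |arg v| < π / 2 := abs_arg_lt_pi_div_two_iff.mpr (Or.inl hv)
  rcases eq_or_ne w 0 with rfl | hw
  · simpa using hv'.le
  have hv0 : v ≠ 0 := fun h => by simp [h] at hv
  have hwv' : |arg (w / v)| ≤ π / 2 := abs_arg_le_pi_div_two_iff.mpr hwv
  have harg : arg w = arg (w / v) + arg v := by
    conv_lhs => rw [← div_mul_cancel₀ w hv0]
    refine arg_mul (div_ne_zero hw hv0) hv0 ⟨?_, ?_⟩ <;>
      linarith [abs_le.mp hwv', abs_lt.mp hv', Real.pi_pos]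
  rwa [harg, add_sub_cancel_right]

theorem re_cpow_div_nonneg {w v : ℂ} {α : ℝ} (hα₀ : 0 ≤ α) (hα₁ : α ≤ 1) (hv : 0 < v.re)
    (hwv : 0 ≤ (w / v).re) : 0 ≤ (w ^ (α : ℂ) / v).re := by
  have h₁ := abs_le.mp (abs_arg_sub_arg_le_pi_div_two hv hwv)
  have h₂ := abs_lt.mp (abs_arg_lt_pi_div_two_iff.mpr (Or.inl hv))
  rw [re_cpow_ofReal_div_s7]
  refine mul_nonneg (by positivity) (Real.cos_nonneg_of_neg_pi_div_two_le_of_le ?_ ?_)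
  · nlinarith
  · nlinarith

theorem re_nonneg_of_forall_mem_frontier_re_nonneg {E : Type*} [NormedAddCommGroup E]
    [NormedSpace ℂ E] [Nontrivial E] {f : E → ℂ} {U : Set E} (hU : Bornology.IsBounded U)
    (hf : DiffContOnCl ℂ f U) (hfr : ∀ z ∈ frontier U, 0 ≤ (f z).re) {z : E}
    (hz : z ∈ closure U) : 0 ≤ (f z).re := by
  have hexp : DiffContOnCl ℂ (fun w => exp (-f w)) U :=
    differentiable_exp.comp_diffContOnCl hf.neg
  have := norm_le_of_forall_mem_frontier_norm_le hU hexp (C := 1)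
    (fun w hw => by simpa [norm_exp] using hfr w hw) hz
  simpa [norm_exp] using this

theorem re_sq_add_im_sq_eq_one {z : ℂ} (hz : ‖z‖ = 1) : z.re ^ 2 + z.im ^ 2 = 1 := by
  simpa [sq, normSq_apply, hz] using (Complex.sq_norm z).symm

theorem re_sq_add_im_sq_le_one {z : ℂ} (hz : ‖z‖ ≤ 1) : z.re ^ 2 + z.im ^ 2 ≤ 1 := by
  have := pow_le_one₀ (norm_nonneg z) hz (n := 2)
  rwa [Complex.sq_norm, normSq_apply, ← sq, ← sq] at this

end Complex

noncomputable def bdf6Gen (z : ℂ) : ℂ :=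
  147 / 60 - 6 * z + (15 / 2) * z ^ 2 - (20 / 3) * z ^ 3 + (15 / 4) * z ^ 4
    - (6 / 5) * z ^ 5 + (1 / 6) * z ^ 6

noncomputable def bdf6Mult (z : ℂ) : ℂ :=
  (1 - (3 / 5) * z) * (1 - (1 / 2) * z) * (1 - (1 / 3) * z)

noncomputable def bdf6CirclePoly (x : ℝ) : ℝ :=
  2 / 9 + 188 / 75 * x + 1052 / 225 * x ^ 2 - 474 / 25 * x ^ 3 + 796 / 45 * x ^ 4
    - 16 / 3 * x ^ 5

theorem bdf6CirclePoly_nonneg {x : ℝ} (hx : x ≤ 1) : 0 ≤ bdf6CirclePoly x := by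
  unfold bdf6CirclePoly
  nlinarith [mul_nonneg (sub_nonneg.2 hx) (sq_nonneg (x + 0.136)), sq_nonneg (x ^ 2 - x)]

theorem bdf6Mult_re_pos {z : ℂ} (hz : ‖z‖ ≤ 1) : 0 < (bdf6Mult z).re := by
  have hxy := re_sq_add_im_sq_le_one hz
  set x := z.re
  set y := z.im
  have h₁ : -1 ≤ x := by nlinarith [sq_nonneg y]
  have h₂ : x ≤ 1 := by nlinarith [sq_nonneg y]
  have hre : (bdf6Mult z).re
      = 1 - 43 / 30 * x + 2 / 3 * (x ^ 2 - y ^ 2) - 1 / 10 * (x ^ 3 - 3 * x * y ^ 2) := by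
    simp only [bdf6Mult, one_div, mul_re, sub_re, one_re, div_ofNat_re, re_ofNat, div_ofNat_im,
      im_ofNat, zero_div, zero_mul, sub_zero, inv_re, normSq_ofNat, div_self_mul_self', inv_im,
      neg_zero, sub_im, one_im, mul_im, add_zero, zero_sub, mul_neg, neg_mul, neg_neg,
      sub_neg_eq_add]
    ring
  rw [hre]
  nlinarith [mul_nonneg (sub_nonneg.2 h₂) (sq_nonneg y),
    mul_nonneg (sub_nonneg.2 h₂) (sq_nonneg (x - 0.57)),
    mul_nonneg (neg_le_iff_add_nonneg.1 h₁) (sq_nonneg (x - 0.57))]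

theorem bdf6_re_mul_conj_of_norm_eq_one {z : ℂ} (hz : ‖z‖ = 1) :
    (bdf6Gen z).re * (bdf6Mult z).re + (bdf6Gen z).im * (bdf6Mult z).im
      = (1 - z.re) * bdf6CirclePoly z.re := by
  have hxy := re_sq_add_im_sq_eq_one hz
  simp only [bdf6Gen, bdf6Mult, bdf6CirclePoly, pow_succ, pow_zero, one_mul, one_div, add_re,
    sub_re, div_ofNat_re, re_ofNat, mul_re, im_ofNat, zero_mul, sub_zero, div_ofNat_im, zero_div,
    mul_im, inv_re, normSq_ofNat, div_self_mul_self', inv_im, neg_zero, one_re, sub_im, one_im,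
    add_zero, zero_sub, mul_neg, neg_mul, neg_neg, sub_neg_eq_add, add_im]
  set x := z.re
  set y := z.im
  linear_combination (-401 / 180 - 61 / 36 * y ^ 2 - 13 / 45 * y ^ 4 - 2 / 225 * y ^ 6
    + 21233 / 1800 * x + 523 / 90 * x * y ^ 2 + 317 / 360 * x * y ^ 4 + 1 / 20 * x * y ^ 6
    - 16013 / 900 * x ^ 2 - 524 / 75 * x ^ 2 * y ^ 2 - 152 / 225 * x ^ 2 * y ^ 4
    + 442 / 45 * x ^ 3 + 589 / 180 * x ^ 3 * y ^ 2 + 1 / 12 * x ^ 3 * y ^ 4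
    - 11 / 225 * x ^ 4 - 98 / 225 * x ^ 4 * y ^ 2 - 103 / 72 * x ^ 5 + 1 / 60 * x ^ 5 * y ^ 2
    + 52 / 225 * x ^ 6 - 1 / 60 * x ^ 7) * hxy

theorem bdf6_re_div_nonneg_of_norm_eq_one {z : ℂ} (hz : ‖z‖ = 1) :
    0 ≤ (bdf6Gen z / bdf6Mult z).re := by
  have hx : z.re ≤ 1 := hz ▸ re_le_norm z
  rw [div_re, ← add_div, bdf6_re_mul_conj_of_norm_eq_one hz]
  exact div_nonneg (mul_nonneg (sub_nonneg.2 hx) (bdf6CirclePoly_nonneg hx)) (normSq_nonneg _)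

theorem bdf6_re_div_nonneg {z : ℂ} (hz : ‖z‖ ≤ 1) : 0 ≤ (bdf6Gen z / bdf6Mult z).re := by
  have hd : DifferentiableOn ℂ (fun w => bdf6Gen w / bdf6Mult w) (closedBall 0 1) :=
    DifferentiableOn.div (by unfold bdf6Gen; fun_prop) (by unfold bdf6Mult; fun_prop)
      fun w hw => fun h => by simpa [h] using bdf6Mult_re_pos (mem_closedBall_zero_iff.mp hw)
  refine re_nonneg_of_forall_mem_frontier_re_nonneg (f := fun w => bdf6Gen w / bdf6Mult w)
    isBounded_ball ((closure_ball (0 : ℂ) one_ne_zero).symm ▸ hd).diffContOnCl ?_ ?_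
  · rw [frontier_ball (0 : ℂ) one_ne_zero]
    exact fun w hw => bdf6_re_div_nonneg_of_norm_eq_one (mem_sphere_zero_iff_norm.mp hw)
  · rwa [closure_ball (0 : ℂ) one_ne_zero, mem_closedBall_zero_iff]

/-- Lemma 4.4: A-stability of the pair (g, μ) for BDF6. -/
theorem stmt_7 (α : ℝ) (hα : α ∈ Set.Ioo (0 : ℝ) 1) (z : ℂ) (hz : ‖z‖ ≤ 1) :
    0 ≤ (((147 / 60 - 6 * z + (15 / 2) * z ^ 2 - (20 / 3) * z ^ 3 + (15 / 4) * z ^ 4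
            - (6 / 5) * z ^ 5 + (1 / 6) * z ^ 6) ^ (α : ℂ)) /
          ((1 - (3 / 5) * z) * (1 - (1 / 2) * z) * (1 - (1 / 3) * z))).re :=
  re_cpow_div_nonneg hα.1.le hα.2.le (bdf6Mult_re_pos hz) (bdf6_re_div_nonneg hz)
end

section
/- For every x ∈ [0, π], one has 163 sin x − 137 sin(2x) + 63 sin(3x) − 12 sin(4x) ≥ 0. -/
/-!
Expanding in `s = sin x`, `c = cos x`, the trigonometric polynomial equals `s * p c` with
`p c = 100 - 226 c + 252 c² - 96 c³ = (1 - c) (96 c² - 156 c + 70) + 30`. The quadratic factor has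
negative discriminant, so `p > 0` on `c ≤ 1`, while `s ≥ 0` on `[0, π]`.
-/

open Real

lemma sin_combination_eq_sin_mul_cubic_cos (x : ℝ) :
    163 * sin x - 137 * sin (2 * x) + 63 * sin (3 * x) - 12 * sin (4 * x) =
      sin x * (100 - 226 * cos x + 252 * cos x ^ 2 - 96 * cos x ^ 3) := by
  have h4 : 4 * x = 2 * (2 * x) := by ring
  rw [h4, sin_two_mul (2 * x), sin_two_mul, cos_two_mul, sin_three_mul]
  linear_combination (-252 * sin x) * sin_sq_add_cos_sq x

lemma cubic_pos_of_le_one {c : ℝ} (hc : c ≤ 1) :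
    0 < 100 - 226 * c + 252 * c ^ 2 - 96 * c ^ 3 := by
  have hquad : 0 < 96 * c ^ 2 - 156 * c + 70 := by nlinarith [sq_nonneg (c - 13 / 16)]
  nlinarith [mul_nonneg (sub_nonneg.mpr hc) hquad.le]

/-- Nonnegativity of b₅ on [0, π], used in the proof of Lemma 4.3 (BDF5). -/
theorem stmt_18 (x : ℝ) (hx : x ∈ Set.Icc 0 Real.pi) :
    0 ≤ 163 * Real.sin x - 137 * Real.sin (2 * x) + 63 * Real.sin (3 * x)
          - 12 * Real.sin (4 * x) := by
  rw [sin_combination_eq_sin_mul_cubic_cos]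
  exact mul_nonneg (sin_nonneg_of_nonneg_of_le_pi hx.1 hx.2)
    (cubic_pos_of_le_one (cos_le_one x)).le
end
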